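/- Let m ≥ 2 be an integer and α > 0 a real number. With θ = 4p^2·(p^2−4r)^2 − 4(p^2−4r)^3 − 36p·(p^2−4r)·q^2 + 32p^3·q^2 − 27q^4, one has the identity (m+α)^{12}·θ = 16·α·(m−1)·𝐩_m(α). -/

import Mathlib

/-!
The expression `θ` is the discriminant `16p⁴r − 4p³q² − 128p²r² + 144pq²r − 27q⁴ + 256r³` of the
depressed quartic `x⁴ + px² + qx + r`, written in the paper's grouping. It is weighted homogeneous of
degree 12 when `p, q, r` have weights 2, 3, 4, which are exactly the powers of `m + α` in the
denominators of `p, q, r`; multiplying by `(m + α)¹²` therefore clears all denominators, and what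
remains is a polynomial identity in `m` and `α`.
-/

/-- The coefficient `p` of the depressed quartic. -/
noncomputable def pCoeff (m : ℕ) (α : ℝ) : ℝ :=
  -(1 / (8 * ((m : ℝ) + α) ^ 2)) *
    (3 * (m : ℝ) ^ 2 - 10 * (m : ℝ) + 11 + 3 * α ^ 2 + 2 * (19 * (m : ℝ) - 21) * α)

/-- The coefficient `q` of the depressed quartic. -/
noncomputable def qCoeff (m : ℕ) (α : ℝ) : ℝ :=
  -(1 / (8 * ((m : ℝ) + α) ^ 3)) *
    (α ^ 3 + α ^ 2 * (11 - 13 * (m : ℝ)) - α * ((m : ℝ) - 1) * (13 * (m : ℝ) + 23)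
      + ((m : ℝ) - 3) * ((m : ℝ) - 1) ^ 2)

/-- The coefficient `r` of the depressed quartic. -/
noncomputable def rCoeff (m : ℕ) (α : ℝ) : ℝ :=
  -(1 / (256 * ((m : ℝ) + α) ^ 4)) *
    (3 * α ^ 4 + 172 * α ^ 3 - 1630 * α ^ 2 + 204 * α + 3 * (m : ℝ) ^ 4
      - 180 * α * (m : ℝ) ^ 3 - 20 * (m : ℝ) ^ 3 - 366 * α ^ 2 * (m : ℝ) ^ 2
      + 1796 * α * (m : ℝ) ^ 2 + 34 * (m : ℝ) ^ 2 - 180 * α ^ 3 * (m : ℝ)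
      + 1988 * α ^ 2 * (m : ℝ) - 1788 * α * (m : ℝ) + 12 * (m : ℝ) - 45)

/-- The degree-8 polynomial `𝐩_m(α)` whose unique positive root is `α_m`. -/
noncomputable def pm (m : ℕ) (α : ℝ) : ℝ :=
  16 * ((m : ℝ) - 1) ^ 2 * α ^ 8
    - 4 * ((m : ℝ) - 1) * (8 * (m : ℝ) ^ 2 + 3) * α ^ 7
    - (16 * (m : ℝ) ^ 4 - 256 * (m : ℝ) ^ 3 + 584 * (m : ℝ) ^ 2 - 496 * (m : ℝ) + 153) * α ^ 6
    + 2 * (32 * (m : ℝ) ^ 5 - 224 * (m : ℝ) ^ 4 + 1238 * (m : ℝ) ^ 3 - 2738 * (m : ℝ) ^ 2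
        + 2545 * (m : ℝ) - 852) * α ^ 5
    - ((m : ℝ) - 1) * (16 * (m : ℝ) ^ 5 + 48 * (m : ℝ) ^ 4 - 1712 * (m : ℝ) ^ 3
        + 6672 * (m : ℝ) ^ 2 - 4321 * (m : ℝ) - 641) * α ^ 4
    - 2 * (16 * (m : ℝ) ^ 7 - 208 * (m : ℝ) ^ 6 + 250 * (m : ℝ) ^ 5 + 2302 * (m : ℝ) ^ 4
        - 3214 * (m : ℝ) ^ 3 - 588 * (m : ℝ) ^ 2 + 1566 * (m : ℝ) - 123) * α ^ 3
    + (16 * (m : ℝ) ^ 8 - 192 * (m : ℝ) ^ 7 + 984 * (m : ℝ) ^ 6 - 2864 * (m : ℝ) ^ 5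
        + 1001 * (m : ℝ) ^ 4 + 4184 * (m : ℝ) ^ 3 - 3870 * (m : ℝ) ^ 2 + 794 * (m : ℝ) - 52) * α ^ 2
    - 2 * ((m : ℝ) - 1) * (22 * (m : ℝ) ^ 6 - 148 * (m : ℝ) ^ 5 + 363 * (m : ℝ) ^ 4
        - 381 * (m : ℝ) ^ 3 + 185 * (m : ℝ) ^ 2 - 60 * (m : ℝ) + 2) * α
    - ((m : ℝ) - 2) ^ 3 * ((m : ℝ) - 1) ^ 2 * (m : ℝ)

section DepressedQuarticDisc

variable {K : Type*} [CommRing K]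

def depressedQuarticDisc (p q r : K) : K :=
  4 * p ^ 2 * (p ^ 2 - 4 * r) ^ 2 - 4 * (p ^ 2 - 4 * r) ^ 3
    - 36 * p * (p ^ 2 - 4 * r) * q ^ 2 + 32 * p ^ 3 * q ^ 2 - 27 * q ^ 4

theorem depressedQuarticDisc_weighted (c p q r : K) :
    depressedQuarticDisc (c ^ 2 * p) (c ^ 3 * q) (c ^ 4 * r) =
      c ^ 12 * depressedQuarticDisc p q r := by
  unfold depressedQuarticDisc
  ring

end DepressedQuarticDisc

theorem pow_mul_neg_one_div_mul {K : Type*} [Field K] {s : K} (hs : s ≠ 0) (n : ℕ) (c x : K) :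
    s ^ n * (-(1 / (c * s ^ n)) * x) = -x / c := by
  have := pow_ne_zero n hs
  simp [field]

theorem depressedQuarticDisc_clear_denominators (m : ℕ) (α : ℝ) (hs : (m : ℝ) + α ≠ 0) :
    depressedQuarticDisc (((m : ℝ) + α) ^ 2 * pCoeff m α) (((m : ℝ) + α) ^ 3 * qCoeff m α)
      (((m : ℝ) + α) ^ 4 * rCoeff m α) = 16 * α * ((m : ℝ) - 1) * pm m α := by
  simp only [pCoeff, qCoeff, rCoeff, pow_mul_neg_one_div_mul hs]
  unfold depressedQuarticDisc pm
  ring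

theorem theta_identity_general (m : ℕ) (α : ℝ) (hα : 0 < α) :
    let p := pCoeff m α
    let q := qCoeff m α
    let r := rCoeff m α
    let θ := 4 * p ^ 2 * (p ^ 2 - 4 * r) ^ 2 - 4 * (p ^ 2 - 4 * r) ^ 3
      - 36 * p * (p ^ 2 - 4 * r) * q ^ 2 + 32 * p ^ 3 * q ^ 2 - 27 * q ^ 4
    ((m : ℝ) + α) ^ 12 * θ = 16 * α * ((m : ℝ) - 1) * pm m α := by
  intro p q r θ
  have hs : (m : ℝ) + α ≠ 0 := by positivity
  show ((m : ℝ) + α) ^ 12 * depressedQuarticDisc p q r = _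
  rw [← depressedQuarticDisc_weighted, depressedQuarticDisc_clear_denominators m α hs]

/-- With `θ = 4p²(p²−4r)² − 4(p²−4r)³ − 36p(p²−4r)q² + 32p³q² − 27q⁴`, one has
`(m+α)¹² θ = 16 α (m−1) 𝐩_m(α)`. -/
theorem theta_identity (m : ℕ) (hm : 2 ≤ m) (α : ℝ) (hα : 0 < α) :
    let p := pCoeff m α
    let q := qCoeff m α
    let r := rCoeff m α
    let θ := 4 * p ^ 2 * (p ^ 2 - 4 * r) ^ 2 - 4 * (p ^ 2 - 4 * r) ^ 3
      - 36 * p * (p ^ 2 - 4 * r) * q ^ 2 + 32 * p ^ 3 * q ^ 2 - 27 * q ^ 4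
    ((m : ℝ) + α) ^ 12 * θ = 16 * α * ((m : ℝ) - 1) * pm m α :=
  theta_identity_general m α hα
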